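/- arXiv:2212.05453 — 6 statements merged into one kernel-verified Lean document; each statement's English description precedes it below -/
import Mathlib

section
/- The semigroup OX_n of order-preserving transformations on a finite chain is regular: for every order-preserving f : X_n → X_n there exists an order-preserving g : X_n → X_n such that f ∘ g ∘ f = f (composing left to right: f g f = f). -/
/-! Take `g y` to be the largest `x` with `f x ≤ y`; it is monotone in `y`. Then `x ≤ g (f x)`
gives `f x ≤ f (g (f x))`, and `g (f x)` itself lies in `f ⁻¹' Iic (f x)` because the supremum
of a nonempty finite subset of a chain is attained. -/

section

variable {α β : Type*} [LinearOrder α] [OrderBot α] [Finite α] [Preorder β]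

noncomputable def supPreimageIic (f : α → β) (y : β) : α :=
  (Set.toFinite (f ⁻¹' Set.Iic y)).toFinset.sup id

theorem monotone_supPreimageIic (f : α → β) : Monotone (supPreimageIic f) := fun _ _ hy =>
  Finset.sup_mono <| Set.Finite.toFinset_subset_toFinset.mpr <|
    Set.preimage_mono <| Set.Iic_subset_Iic.mpr hy

theorem le_supPreimageIic {f : α → β} {x : α} {y : β} (hx : f x ≤ y) :
    x ≤ supPreimageIic f y :=
  Finset.le_sup (f := id) ((Set.Finite.mem_toFinset _).mpr (show x ∈ f ⁻¹' Set.Iic y from hx))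

theorem map_supPreimageIic_le {f : α → β} {x : α} {y : β} (hx : f x ≤ y) :
    f (supPreimageIic f y) ≤ y := by
  obtain ⟨z, hz, hsup⟩ := Finset.exists_mem_eq_sup _
    ⟨x, (Set.Finite.mem_toFinset _).mpr (show x ∈ f ⁻¹' Set.Iic y from hx)⟩ id
  rw [supPreimageIic, hsup]
  exact ((Set.Finite.mem_toFinset _).mp hz : z ∈ f ⁻¹' Set.Iic y)

end

theorem Monotone.map_supPreimageIic_map {α β : Type*} [LinearOrder α] [OrderBot α] [Finite α]
    [PartialOrder β] {f : α → β} (hf : Monotone f) (x : α) :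
    f (supPreimageIic f (f x)) = f x :=
  le_antisymm (map_supPreimageIic_le le_rfl) (hf (le_supPreimageIic le_rfl))

/-- The semigroup of order-preserving transformations on a finite chain is
regular: for every order-preserving `f` there is an order-preserving `g` with
`f g f = f` (composing left to right). -/
theorem stmt4 (n : ℕ) (f : Fin n → Fin n) (hf : Monotone f) :
    ∃ g : Fin n → Fin n, Monotone g ∧ ∀ x, f (g (f x)) = f x := by
  cases n with
  | zero => exact ⟨id, monotone_id, fun x => x.elim0⟩
  | succ m => exact ⟨supPreimageIic f, monotone_supPreimageIic f, hf.map_supPreimageIic_map⟩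
end

section
/- Every normal cone in the principal left ideal category L(OX_n) is a principal cone: if γ is a normal cone with vertex Se_A, then there exists an order-preserving transformation α ∈ OX_n with image A such that γ = ρ^α, where ρ^α(Se) = ρ(e, e·α, e_A) for each idempotent e. -/
/-- The semigroup `OX_n` of order-preserving non-invertible transformations of
the chain `Fin n`, composed left to right. -/
def OX (n : ℕ) := {f : Fin n → Fin n // Monotone f ∧ ¬ Function.Surjective f}

instance (n : ℕ) : Mul (OX n) :=
  ⟨fun f g => ⟨g.1 ∘ f.1, g.2.1.comp f.2.1, fun h => g.2.2 h.of_comp⟩⟩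

/-- The principal left ideal `S e`. -/
def Lideal {n : ℕ} (e : OX n) : Set (OX n) := {x | ∃ s, x = s * e}

/-!
A cone `γ` is determined by its components at the constant idempotents `c_p`: the inclusion
`S c_p ⊆ S e` (for `p ∈ Im e`) forces every element `u` translating the component at `S e` to
satisfy `u p = α p`, where `α p := γ(S c_p)(c_p)` evaluated at `p`. Hence `γ = ρ^α`. Any two
points `i ≤ j` lie in the image of one idempotent with at most two values (non-surjective as
`n ≥ 3`), so `α` is order-preserving; and `Im α = Im e_A` because some component maps onto `S e_A`.
-/

theorem Function.not_surjective_of_forall_mem {α β : Type*} [Fintype β] {f : α → β}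
    {s : Finset β} (hs : s.card < Fintype.card β) (hf : ∀ x, f x ∈ s) :
    ¬ Function.Surjective f := by
  intro hsurj
  have huniv : (Finset.univ : Finset β) ⊆ s := fun y _ => by
    obtain ⟨x, rfl⟩ := hsurj y
    exact hf x
  exact (Finset.card_le_card huniv).not_gt (by simpa using hs)

namespace OX

variable {n : ℕ}

@[simp]
theorem mul_val (x y : OX n) : (x * y).1 = y.1 ∘ x.1 := rfl

theorem apply_of_mem_range {e : OX n} (he : e * e = e) {p : Fin n}
    (hp : p ∈ Set.range e.1) : e.1 p = p := by
  obtain ⟨q, rfl⟩ := hp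
  exact congrFun (congrArg Subtype.val he) q

theorem self_mem_Lideal {e : OX n} (he : e * e = e) : e ∈ Lideal e := ⟨e, he.symm⟩

theorem mul_mem_Lideal {u f : OX n} (h : u * f = u) (x : OX n) : x * u ∈ Lideal f :=
  ⟨x * u, congrArg (x * ·) h.symm⟩

theorem Lideal_subset_of_mem {c e : OX n} (hc : c ∈ Lideal e) : Lideal c ⊆ Lideal e := by
  rintro x ⟨s, rfl⟩
  obtain ⟨t, rfl⟩ := hc
  exact ⟨s * t, rfl⟩

theorem apply_mem_range_of_mem_Lideal {x e : OX n} (hx : x ∈ Lideal e) (a : Fin n) :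
    x.1 a ∈ Set.range e.1 := by
  obtain ⟨s, rfl⟩ := hx
  exact ⟨s.1 a, rfl⟩

def const (hn : 2 ≤ n) (i : Fin n) : OX n :=
  ⟨fun _ => i, monotone_const,
    Function.not_surjective_of_forall_mem (s := {i}) (by simp; omega)
      fun _ => Finset.mem_singleton_self i⟩

theorem const_mul_self {hn : 2 ≤ n} {i : Fin n} : const hn i * const hn i = const hn i := rfl

theorem const_mem_Lideal (hn : 2 ≤ n) {e : OX n} (he : e * e = e) {p : Fin n}
    (hp : p ∈ Set.range e.1) : const hn p ∈ Lideal e :=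
  ⟨const hn p, Subtype.ext (funext fun _ => (apply_of_mem_range he hp).symm)⟩

def twoStep (hn : 3 ≤ n) {i j : Fin n} (hij : i ≤ j) : OX n :=
  ⟨fun x => if x < j then i else j,
    fun x y hxy => by dsimp only; split_ifs <;> order,
    Function.not_surjective_of_forall_mem (s := {i, j})
      ((Finset.card_le_two).trans_lt (by simp; omega))
      fun x => by split_ifs <;> simp⟩

variable {hn : 3 ≤ n} {i j : Fin n} {hij : i ≤ j}

theorem twoStep_mul_self : twoStep hn hij * twoStep hn hij = twoStep hn hij := by
  refine Subtype.ext (funext fun x => ?_)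
  show (if (if x < j then i else j) < j then i else j) = if x < j then i else j
  split_ifs <;> order

theorem left_mem_range_twoStep : i ∈ Set.range (twoStep hn hij).1 :=
  ⟨i, by simp only [twoStep]; split_ifs <;> order⟩

theorem right_mem_range_twoStep : j ∈ Set.range (twoStep hn hij).1 :=
  ⟨j, if_neg (lt_irrefl j)⟩

end OX

open OX

section Cone

variable {n : ℕ} (hn : 2 ≤ n) (γ : ∀ e : OX n, e * e = e → OX n → OX n)

def coneFun (p : Fin n) : Fin n := (γ (const hn p) const_mul_self (const hn p)).1 p

variable {hn γ}
variable (hcompat : ∀ e f he hf, Lideal e ⊆ Lideal f → ∀ x ∈ Lideal e, γ f hf x = γ e he x)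
include hcompat

theorem apply_eq_coneFun {e : OX n} (he : e * e = e) {u : OX n}
    (hu : ∀ x ∈ Lideal e, γ e he x = x * u) {p : Fin n} (hp : p ∈ Set.range e.1) :
    u.1 p = coneFun hn γ p := by
  have hc : const hn p ∈ Lideal e := const_mem_Lideal hn he hp
  calc u.1 p = (const hn p * u).1 p := rfl
    _ = (γ e he (const hn p)).1 p := by rw [hu _ hc]
    _ = coneFun hn γ p := by
      rw [hcompat _ _ _ he (Lideal_subset_of_mem hc) _ (self_mem_Lideal const_mul_self)]
      rfl

variable (htrans : ∀ e he, ∃ u : OX n, ∀ x ∈ Lideal e, γ e he x = x * u)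
include htrans

theorem cone_val_eq {e : OX n} (he : e * e = e) {x : OX n} (hx : x ∈ Lideal e) :
    (γ e he x).1 = coneFun hn γ ∘ x.1 := by
  obtain ⟨u, hu⟩ := htrans e he
  rw [hu x hx]
  exact funext fun a => apply_eq_coneFun hcompat he hu (apply_mem_range_of_mem_Lideal hx a)

theorem range_coneFun {eA : OX n} (heA : eA * eA = eA)
    (hvertex : ∀ e he, ∀ x ∈ Lideal e, γ e he x ∈ Lideal eA)
    (hnormal : ∃ e he, Set.SurjOn (γ e he) (Lideal e) (Lideal eA)) :
    Set.range (coneFun hn γ) = Set.range eA.1 := by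
  refine subset_antisymm ?_ ?_
  · rintro _ ⟨p, rfl⟩
    exact apply_mem_range_of_mem_Lideal
      (hvertex _ const_mul_self _ (self_mem_Lideal const_mul_self)) p
  · obtain ⟨e, he, hsurj⟩ := hnormal
    obtain ⟨x, hx, hxA⟩ := hsurj (self_mem_Lideal heA)
    rw [← hxA, cone_val_eq hcompat htrans he hx]
    exact Set.range_comp_subset_range _ _

end Cone

theorem coneFun_monotone {n : ℕ} (hn : 3 ≤ n) {γ : ∀ e : OX n, e * e = e → OX n → OX n}
    (hcompat : ∀ e f he hf, Lideal e ⊆ Lideal f → ∀ x ∈ Lideal e, γ f hf x = γ e he x)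
    (htrans : ∀ e he, ∃ u : OX n, ∀ x ∈ Lideal e, γ e he x = x * u) :
    Monotone (coneFun (Nat.le_of_succ_le hn) γ) := by
  intro i j hij
  obtain ⟨u, hu⟩ := htrans (twoStep hn hij) twoStep_mul_self
  calc coneFun _ γ i = u.1 i := (apply_eq_coneFun hcompat _ hu left_mem_range_twoStep).symm
    _ ≤ u.1 j := u.2.1 hij
    _ = coneFun _ γ j := apply_eq_coneFun hcompat _ hu right_mem_range_twoStep

theorem stmt10_general (n : ℕ) (hn : 3 ≤ n) (eA : OX n) (heA : eA * eA = eA)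
    (γ : ∀ e : OX n, e * e = e → OX n → OX n)
    (htrans : ∀ e he, ∃ u : OX n, e * u = u ∧ u * eA = u ∧
      ∀ x ∈ Lideal e, γ e he x = x * u)
    (hcompat : ∀ e f he hf, Lideal e ⊆ Lideal f → ∀ x ∈ Lideal e, γ f hf x = γ e he x)
    (hnormal : ∃ e he, Set.BijOn (γ e he) (Lideal e) (Lideal eA)) :
    ∃ α : OX n, Set.range α.1 = Set.range eA.1 ∧
      ∀ e he, ∀ x ∈ Lideal e, γ e he x = x * α := by
  have htrans' : ∀ e he, ∃ u : OX n, ∀ x ∈ Lideal e, γ e he x = x * u :=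
    fun e he => (htrans e he).imp fun _ h => h.2.2
  have hvertex : ∀ e he, ∀ x ∈ Lideal e, γ e he x ∈ Lideal eA := by
    intro e he x hx
    obtain ⟨u, -, hu, hγ⟩ := htrans e he
    exact hγ x hx ▸ mul_mem_Lideal hu x
  have hrange := range_coneFun (hn := Nat.le_of_succ_le hn) hcompat htrans' heA hvertex
    (hnormal.imp fun _ ⟨he, hbij⟩ => ⟨he, hbij.surjOn⟩)
  refine ⟨⟨coneFun _ γ, coneFun_monotone hn hcompat htrans', fun hsurj => eA.2.2 ?_⟩,
    hrange, fun e he x hx => Subtype.ext (cone_val_eq hcompat htrans' he hx)⟩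
  exact Set.range_eq_univ.1 (hrange ▸ Set.range_eq_univ.2 hsurj)

/-- Every normal cone in the principal left ideal category `L(OX_n)` is a
principal cone: a cone with vertex `S e_A` whose component at each `S e` is a
partial right translation compatible with inclusions, and having some bijective
component, must be of the form `ρ^α : x ↦ x α` for some `α ∈ OX_n` with
`Im α = Im e_A`. -/
theorem stmt10 (n : ℕ) (hn : 3 ≤ n) (eA : OX n) (heA : eA * eA = eA)
    (γ : ∀ e : OX n, e * e = e → OX n → OX n)
    (hwd : ∀ e f he hf, Lideal e = Lideal f → ∀ x ∈ Lideal e, γ e he x = γ f hf x)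
    (htrans : ∀ e he, ∃ u : OX n, e * u = u ∧ u * eA = u ∧
      ∀ x ∈ Lideal e, γ e he x = x * u)
    (hcompat : ∀ e f he hf, Lideal e ⊆ Lideal f → ∀ x ∈ Lideal e, γ f hf x = γ e he x)
    (hnormal : ∃ e he, Set.BijOn (γ e he) (Lideal e) (Lideal eA)) :
    ∃ α : OX n, Set.range α.1 = Set.range eA.1 ∧
      ∀ e he, ∀ x ∈ Lideal e, γ e he x = x * α :=
  stmt10_general n hn eA heA γ htrans hcompat hnormal
end

section
/- The power set category P_o(X_n), whose objects are the proper nonempty subsets of the finite chain X_n and whose morphisms A → B are order-preserving maps, with inclusions as subobject morphisms, is a normal category: every inclusion splits, every morphism has a normal factorization q∘u∘j (retraction, isomorphism, inclusion), and for every object A there is a normal cone with vertex A whose component at A is the identity. -/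
/-!
Retractions come from the order on the chain: a nonempty subset `S` is a retract of any
superset via `x ↦` the largest element of `S` below `x` (or `min S` if there is none), and
this same map, being defined on the whole chain, gives a cone with vertex `S` that is
compatible with all inclusions. For the normal factorization of a monotone `f`, send each
point to the least element of its fibre: this is a monotone idempotent whose image meets
every fibre exactly once, so `f` restricted to the image is an order-isomorphism onto the
range of `f`.
-/

namespace Finset

variable {α : Type*} [LinearOrder α] (s : Finset α) (hs : s.Nonempty)

noncomputable def floorRetraction (x : α) : α :=
  (insert (s.min' hs) (s.filter (· ≤ x))).max' (insert_nonempty _ _)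

theorem floorRetraction_mem (x : α) : s.floorRetraction hs x ∈ s := by
  have hmem := max'_mem (insert (s.min' hs) (s.filter (· ≤ x))) (insert_nonempty _ _)
  rcases mem_insert.mp hmem with h | h
  · rw [floorRetraction, h]
    exact min'_mem s hs
  · exact (mem_filter.mp h).1

theorem monotone_floorRetraction : Monotone (s.floorRetraction hs) := fun _ _ hxy =>
  max'_subset _ <| insert_subset_insert _ <| monotone_filter_right s fun _ _ hz => hz.trans hxy

theorem floorRetraction_of_mem {x : α} (hx : x ∈ s) : s.floorRetraction hs x = x := by
  refine le_antisymm (max'_le _ _ _ fun y hy => ?_) (le_max' _ _ ?_)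
  · rcases mem_insert.mp hy with rfl | hy
    · exact min'_le s x hx
    · exact (mem_filter.mp hy).2
  · exact mem_insert_of_mem (mem_filter.mpr ⟨hx, le_rfl⟩)

end Finset

theorem Set.Finite.exists_monotone_retraction {α : Type*} [LinearOrder α] {S : Set α}
    (hfin : S.Finite) (hS : S.Nonempty) : ∃ r : α → S, Monotone r ∧ ∀ x : S, r x = x := by
  have hs : hfin.toFinset.Nonempty := hfin.toFinset_nonempty.mpr hS
  refine ⟨fun x => ⟨_, hfin.mem_toFinset.mp (hfin.toFinset.floorRetraction_mem hs x)⟩,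
    fun _ _ hxy => hfin.toFinset.monotone_floorRetraction hs hxy, fun x => ?_⟩
  exact Subtype.ext (hfin.toFinset.floorRetraction_of_mem hs (hfin.mem_toFinset.mpr x.2))

section FiberMin

variable {α β : Type*} [LinearOrder α] [WellFoundedLT α] (f : α → β)

noncomputable def fiberMin (a : α) : α :=
  wellFounded_lt.min {b | f b = f a} ⟨a, rfl⟩

theorem apply_fiberMin (a : α) : f (fiberMin f a) = f a :=
  wellFounded_lt.min_mem {b | f b = f a} ⟨a, rfl⟩

theorem fiberMin_le {a b : α} (h : f b = f a) : fiberMin f a ≤ b :=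
  (wellFounded_lt (α := α)).min_le h

theorem fiberMin_congr {a b : α} (h : f a = f b) : fiberMin f a = fiberMin f b :=
  le_antisymm (fiberMin_le f ((apply_fiberMin f b).trans h.symm))
    (fiberMin_le f ((apply_fiberMin f a).trans h))

theorem fiberMin_fiberMin (a : α) : fiberMin f (fiberMin f a) = fiberMin f a :=
  fiberMin_congr f (apply_fiberMin f a)

theorem injOn_range_fiberMin : Set.InjOn f (Set.range (fiberMin f)) := by
  rintro _ ⟨a, rfl⟩ _ ⟨b, rfl⟩ h
  rw [apply_fiberMin f, apply_fiberMin f] at h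
  exact fiberMin_congr f h

theorem range_comp_fiberMin : Set.range (f ∘ fiberMin f) = Set.range f := by
  simp only [Function.comp_def, apply_fiberMin]

variable [LinearOrder β] {f}

theorem monotone_fiberMin (hf : Monotone f) : Monotone (fiberMin f) := by
  intro a b hab
  rcases (hf hab).eq_or_lt with h | h
  · exact (fiberMin_congr f h).le
  · by_contra! hlt
    have := hf hlt.le
    rw [apply_fiberMin f, apply_fiberMin f] at this
    exact this.not_gt h

theorem Monotone.exists_normal_factorization (hf : Monotone f) :
    ∃ (A' : Set α) (q : α → A') (u : A' ≃o Set.range f),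
      (∀ a, ∃! a' : A', f a' = f a) ∧ Monotone q ∧ (∀ a' : A', q a' = a') ∧
      (∀ a' : A', (u a' : β) = f a') ∧ ∀ a, f a = u (q a) := by
  set A' := Set.range (fiberMin f)
  have hq : ∀ a' : A', Set.rangeFactorization (fiberMin f) a' = a' := by
    rintro ⟨_, a, rfl⟩
    exact Subtype.ext (fiberMin_fiberMin f a)
  have hfA' : StrictMono (f ∘ Subtype.val : A' → β) :=
    (hf.comp (Subtype.mono_coe _)).strictMono_of_injective
      ((injOn_range_fiberMin f).injective)
  have hrange : Set.range (f ∘ Subtype.val : A' → β) = Set.range f := by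
    rw [Set.range_comp, Subtype.range_coe, ← Set.range_comp, range_comp_fiberMin]
  refine ⟨A', Set.rangeFactorization (fiberMin f),
    (hfA'.orderIso _).trans (OrderIso.setCongr _ _ hrange), fun a => ?_,
    fun _ _ hab => monotone_fiberMin hf hab, hq, fun _ => rfl, fun a => (apply_fiberMin f a).symm⟩
  refine ⟨Set.rangeFactorization (fiberMin f) a, apply_fiberMin f a, fun a' ha' => ?_⟩
  rw [← hq a']
  exact Subtype.ext (fiberMin_congr f ha')

end FiberMin

theorem stmt13_general (n : ℕ) :
    -- (1) every inclusion splits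
    (∀ A' A : Set (Fin n), A'.Nonempty → A' ≠ Set.univ → A.Nonempty → A ≠ Set.univ →
      ∀ h : A' ⊆ A, ∃ q : A → A', Monotone q ∧ ∀ x : A', q (Set.inclusion h x) = x) ∧
    -- (2) every morphism has a normal factorization
    (∀ A B : Set (Fin n), A.Nonempty → A ≠ Set.univ → B.Nonempty → B ≠ Set.univ →
      ∀ f : A → B, Monotone f →
        ∃ (A' : Set A) (q : A → A') (u : A' ≃o (Set.range f : Set B)),
          (∀ a : A, ∃! a' : A', f (a' : A) = f a) ∧
          Monotone q ∧
          (∀ a' : A', q (a' : A) = a') ∧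
          (∀ a' : A', ((u a' : (Set.range f : Set B)) : B) = f (a' : A)) ∧
          (∀ a : A, f a = ((u (q a) : (Set.range f : Set B)) : B))) ∧
    -- (3) each object is the vertex of a normal cone with identity component there
    (∀ A : Set (Fin n), A.Nonempty → A ≠ Set.univ →
      ∃ γ : ∀ B : Set (Fin n), B.Nonempty ∧ B ≠ Set.univ → (B → A),
        (∀ B hB, Monotone (γ B hB)) ∧
        (∀ (B B' : Set (Fin n)) (hB : B.Nonempty ∧ B ≠ Set.univ) (hB' : B'.Nonempty ∧ B' ≠ Set.univ) (h : B ⊆ B'), ∀ x : B, γ B' hB' (Set.inclusion h x) = γ B hB x) ∧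
        (∀ hA : A.Nonempty ∧ A ≠ Set.univ, ∀ x : A, γ A hA x = x)) := by
  refine ⟨fun A' A hA' _ _ _ h => ?_, fun A B _ _ _ _ f hf => hf.exists_normal_factorization,
    fun A hA _ => ?_⟩
  · obtain ⟨r, hr, hrA'⟩ := A'.toFinite.exists_monotone_retraction hA'
    exact ⟨fun a => r a, fun _ _ hab => hr hab, fun x => hrA' x⟩
  · obtain ⟨r, hr, hrA⟩ := A.toFinite.exists_monotone_retraction hA
    exact ⟨fun _ _ b => r b, fun _ _ _ _ hab => hr hab, fun _ _ _ _ _ _ => rfl,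
      fun _ x => hrA x⟩

/-- The power set category `P_o(X_n)` (objects: proper nonempty subsets of the
chain `Fin n`; morphisms: order-preserving maps; subobjects: inclusions) is a
normal category: every inclusion splits, every morphism has a normal
factorization (retraction, order-isomorphism, inclusion), and every object `A`
is the vertex of a (normal) cone whose component at `A` is the identity. -/
theorem stmt13 (n : ℕ) (hn : 3 ≤ n) :
    -- (1) every inclusion splits
    (∀ A' A : Set (Fin n), A'.Nonempty → A' ≠ Set.univ → A.Nonempty → A ≠ Set.univ →
      ∀ h : A' ⊆ A, ∃ q : A → A', Monotone q ∧ ∀ x : A', q (Set.inclusion h x) = x) ∧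
    -- (2) every morphism has a normal factorization
    (∀ A B : Set (Fin n), A.Nonempty → A ≠ Set.univ → B.Nonempty → B ≠ Set.univ →
      ∀ f : A → B, Monotone f →
        ∃ (A' : Set A) (q : A → A') (u : A' ≃o (Set.range f : Set B)),
          (∀ a : A, ∃! a' : A', f (a' : A) = f a) ∧
          Monotone q ∧
          (∀ a' : A', q (a' : A) = a') ∧
          (∀ a' : A', ((u a' : (Set.range f : Set B)) : B) = f (a' : A)) ∧
          (∀ a : A, f a = ((u (q a) : (Set.range f : Set B)) : B))) ∧
    -- (3) each object is the vertex of a normal cone with identity component there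
    (∀ A : Set (Fin n), A.Nonempty → A ≠ Set.univ →
      ∃ γ : ∀ B : Set (Fin n), B.Nonempty ∧ B ≠ Set.univ → (B → A),
        (∀ B hB, Monotone (γ B hB)) ∧
        (∀ (B B' : Set (Fin n)) (hB : B.Nonempty ∧ B ≠ Set.univ) (hB' : B'.Nonempty ∧ B' ≠ Set.univ) (h : B ⊆ B'), ∀ x : B, γ B' hB' (Set.inclusion h x) = γ B hB x) ∧
        (∀ hA : A.Nonempty ∧ A ≠ Set.univ, ∀ x : A, γ A hA x = x)) :=
  stmt13_general n
end

section
/- The principal left ideal category L(OX_n) is isomorphic to the power set category P_o(X_n), via the functor F with F(Se_A) = A on objects and F(ρ(e_A, u, e_B)) = u restricted to A on morphisms; F is well-defined, functorial, inclusion-preserving, bijective on objects, and fully faithful. -/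
/-!
An idempotent `e` of `OX_n` is a retraction onto its image `A`, so `s * e = s` says exactly
that the image of `s` lies in `A`; this identifies `S e_A ⊆ S e_B` with `A ⊆ B`. Every proper
nonempty `A` is the image of an idempotent, sending `x` to the largest point of `A` below it.
A morphism `u ∈ e_A S e_B` satisfies `u = e_A u`, so it is determined by its restriction to `A`,
and any order-preserving `g : A → B` extends to `x ↦ g (e_A x)`.
-/

open Set

section FloorRetract

variable {α : Type*} [LinearOrder α] (s : Finset α) (hs : s.Nonempty)

def Finset.floorRetract (x : α) : α :=
  if h : (s.filter (· ≤ x)).Nonempty then (s.filter (· ≤ x)).max' h else s.min' hs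

lemma Finset.floorRetract_mem (x : α) : s.floorRetract hs x ∈ s := by
  unfold floorRetract
  split
  · exact mem_of_mem_filter _ (max'_mem _ ‹_›)
  · exact s.min'_mem hs

lemma Finset.floorRetract_of_mem {a : α} (ha : a ∈ s) : s.floorRetract hs a = a := by
  have hne : (s.filter (· ≤ a)).Nonempty := ⟨a, mem_filter.2 ⟨ha, le_rfl⟩⟩
  rw [floorRetract, dif_pos hne]
  exact le_antisymm (mem_filter.1 (max'_mem _ hne)).2
    (le_max' (s.filter (· ≤ a)) a (mem_filter.2 ⟨ha, le_rfl⟩))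

lemma Finset.monotone_floorRetract : Monotone (s.floorRetract hs) := by
  intro x y hxy
  unfold floorRetract
  by_cases hx : (s.filter (· ≤ x)).Nonempty
  · have hsub : s.filter (· ≤ x) ⊆ s.filter (· ≤ y) :=
      fun z hz => mem_filter.2 ⟨(mem_filter.1 hz).1, (mem_filter.1 hz).2.trans hxy⟩
    rw [dif_pos hx, dif_pos (hx.mono hsub)]
    exact max'_subset hx hsub
  · rw [dif_neg hx]
    split
    · exact s.min'_le _ (mem_of_mem_filter _ (max'_mem _ ‹_›))
    · exact le_rfl

end FloorRetract

namespace OX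

variable {n : ℕ}

lemma apply_eq_self_of_mem_range {e : OX n} (he : IsIdempotentElem e) {y : Fin n}
    (hy : y ∈ range e.1) : e.1 y = y := by
  obtain ⟨z, rfl⟩ := hy
  exact congrFun (congrArg Subtype.val he) z

lemma range_nonempty (e : OX n) : (range e.1).Nonempty := by
  by_contra h
  have : IsEmpty (Fin n) := range_eq_empty_iff.1 (not_nonempty_iff_eq_empty.1 h)
  exact e.2.2 isEmptyElim

lemma range_ne_univ (e : OX n) : range e.1 ≠ univ := fun h => e.2.2 (range_eq_univ.1 h)

lemma mul_eq_left_iff_range_subset {s e : OX n} (he : IsIdempotentElem e) :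
    s * e = s ↔ range s.1 ⊆ range e.1 := by
  constructor
  · rintro h _ ⟨x, rfl⟩
    exact ⟨s.1 x, congrFun (congrArg Subtype.val h) x⟩
  · intro h
    exact Subtype.ext (funext fun x => apply_eq_self_of_mem_range he (h ⟨x, rfl⟩))

lemma exists_isIdempotentElem_range_eq {A : Set (Fin n)} (hA : A.Nonempty) (hA' : A ≠ univ) :
    ∃ e : OX n, IsIdempotentElem e ∧ range e.1 = A := by
  set s := (toFinite A).toFinset
  have hs : s.Nonempty := (Finite.toFinset_nonempty _).2 hA
  have hrange : range (s.floorRetract hs) = A := by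
    refine Subset.antisymm ?_ fun a ha => ⟨a, s.floorRetract_of_mem hs (by simpa [s] using ha)⟩
    rintro _ ⟨x, rfl⟩
    simpa [s] using s.floorRetract_mem hs x
  refine ⟨⟨s.floorRetract hs, s.monotone_floorRetract hs, fun h => hA' (hrange ▸ h.range_eq)⟩,
    Subtype.ext (funext fun x => s.floorRetract_of_mem hs (s.floorRetract_mem hs x)), hrange⟩

def extend {eA eB : OX n} (g : range eA.1 → range eB.1) (hg : Monotone g) : OX n :=
  ⟨fun x => g ⟨eA.1 x, x, rfl⟩, fun _ _ hxy => hg (eA.2.1 hxy),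
    fun h => range_ne_univ eB (univ_subset_iff.1 (h.range_eq ▸ range_subset_iff.2 fun _ => (g _).2))⟩

variable {eA eB : OX n} {g : range eA.1 → range eB.1} (hg : Monotone g)

lemma extend_apply_of_mem (heA : IsIdempotentElem eA) {x : Fin n} (hx : x ∈ range eA.1) :
    (extend g hg).1 x = g ⟨x, hx⟩ := by
  simp only [extend, apply_eq_self_of_mem_range heA hx]

lemma mul_extend (heA : IsIdempotentElem eA) : eA * extend g hg = extend g hg :=
  Subtype.ext (funext fun x => extend_apply_of_mem hg heA ⟨x, rfl⟩)

lemma extend_mul (heB : IsIdempotentElem eB) : extend g hg * eB = extend g hg :=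
  (mul_eq_left_iff_range_subset heB).2 (range_subset_iff.2 fun _ => (g _).2)

lemma eq_extend {u : OX n} (hu : eA * u = u) (hug : ∀ x : range eA.1, u.1 x.1 = (g x).1) :
    u = extend g hg :=
  Subtype.ext (funext fun x => (congrFun (congrArg Subtype.val hu) x).symm.trans (hug ⟨_, x, rfl⟩))

end OX

lemma lideal_subset_lideal_iff {n : ℕ} {e f : OX n} (he : IsIdempotentElem e)
    (hf : IsIdempotentElem f) : Lideal e ⊆ Lideal f ↔ range e.1 ⊆ range f.1 := by
  constructor
  · intro h
    obtain ⟨s, hs⟩ := h ⟨e, he.symm⟩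
    rw [hs]
    exact range_comp_subset_range s.1 f.1
  · rintro h _ ⟨s, rfl⟩
    exact ⟨s * e, ((OX.mul_eq_left_iff_range_subset (s := s * e) hf).2
      ((range_comp_subset_range s.1 e.1).trans h)).symm⟩

theorem stmt14_general (n : ℕ) :
    -- object map well defined and injective
    (∀ e f : OX n, e * e = e → f * f = f →
      (Lideal e = Lideal f ↔ Set.range e.1 = Set.range f.1)) ∧
    -- object map surjective onto proper nonempty subsets
    (∀ e : OX n, e * e = e → (Set.range e.1).Nonempty ∧ Set.range e.1 ≠ Set.univ) ∧
    (∀ A : Set (Fin n), A.Nonempty → A ≠ Set.univ →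
      ∃ e : OX n, e * e = e ∧ Set.range e.1 = A) ∧
    -- inclusion preserving order isomorphism on objects
    (∀ e f : OX n, e * e = e → f * f = f →
      (Lideal e ⊆ Lideal f ↔ Set.range e.1 ⊆ Set.range f.1)) ∧
    -- fully faithful
    (∀ eA eB : OX n, eA * eA = eA → eB * eB = eB →
      ∀ g : (Set.range eA.1 : Set (Fin n)) → (Set.range eB.1 : Set (Fin n)), Monotone g →
        ∃! u : OX n, eA * u = u ∧ u * eB = u ∧
          ∀ x : (Set.range eA.1 : Set (Fin n)), u.1 x.1 = (g x).1) ∧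
    -- functorial: F(ρ(e_A,u,e_B) ρ(e_B,v,e_C)) = F(ρ(e_A,u,e_B)) F(ρ(e_B,v,e_C))
    (∀ eA eB eC : OX n, eA * eA = eA → eB * eB = eB → eC * eC = eC →
      ∀ u v : OX n, eA * u = u → u * eB = u → eB * v = v → v * eC = v →
        ∀ x ∈ Set.range eA.1, (u * v).1 x = v.1 (u.1 x)) := by
  refine ⟨fun e f he hf => ?_, fun e _ => ⟨e.range_nonempty, e.range_ne_univ⟩,
    fun _ hA hA' => OX.exists_isIdempotentElem_range_eq hA hA',
    fun _ _ he hf => lideal_subset_lideal_iff he hf, fun eA eB heA heB g hg => ?_,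
    fun _ _ _ _ _ _ _ _ _ _ _ _ _ _ => rfl⟩
  · rw [Subset.antisymm_iff, Subset.antisymm_iff, lideal_subset_lideal_iff he hf,
      lideal_subset_lideal_iff hf he]
  · exact ⟨OX.extend g hg, ⟨OX.mul_extend hg heA, OX.extend_mul hg heB,
      fun x => OX.extend_apply_of_mem hg heA x.2⟩,
      fun u ⟨hu, _, hug⟩ => OX.eq_extend hg hu hug⟩

/-- The principal left ideal category `L(OX_n)` is isomorphic to the power set
category `P_o(X_n)` via `F : S e_A ↦ A`, `ρ(e_A,u,e_B) ↦ u|_A`: the object map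
is well defined, injective (`S e_A = S e_B` iff `Im e_A = Im e_B`), surjective
onto proper nonempty subsets, inclusion-preserving (an order isomorphism), `F`
is fully faithful (every order-preserving `g : Im e_A → Im e_B` is `u|_{Im e_A}`
for a unique `u ∈ e_A S e_B`), and functorial (restriction of a composite is
the composite of restrictions). -/
theorem stmt14 (n : ℕ) (hn : 3 ≤ n) :
    -- object map well defined and injective
    (∀ e f : OX n, e * e = e → f * f = f →
      (Lideal e = Lideal f ↔ Set.range e.1 = Set.range f.1)) ∧
    -- object map surjective onto proper nonempty subsets
    (∀ e : OX n, e * e = e → (Set.range e.1).Nonempty ∧ Set.range e.1 ≠ Set.univ) ∧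
    (∀ A : Set (Fin n), A.Nonempty → A ≠ Set.univ →
      ∃ e : OX n, e * e = e ∧ Set.range e.1 = A) ∧
    -- inclusion preserving order isomorphism on objects
    (∀ e f : OX n, e * e = e → f * f = f →
      (Lideal e ⊆ Lideal f ↔ Set.range e.1 ⊆ Set.range f.1)) ∧
    -- fully faithful
    (∀ eA eB : OX n, eA * eA = eA → eB * eB = eB →
      ∀ g : (Set.range eA.1 : Set (Fin n)) → (Set.range eB.1 : Set (Fin n)), Monotone g →
        ∃! u : OX n, eA * u = u ∧ u * eB = u ∧
          ∀ x : (Set.range eA.1 : Set (Fin n)), u.1 x.1 = (g x).1) ∧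
    -- functorial: F(ρ(e_A,u,e_B) ρ(e_B,v,e_C)) = F(ρ(e_A,u,e_B)) F(ρ(e_B,v,e_C))
    (∀ eA eB eC : OX n, eA * eA = eA → eB * eB = eB → eC * eC = eC →
      ∀ u v : OX n, eA * u = u → u * eB = u → eB * v = v → v * eC = v →
        ∀ x ∈ Set.range eA.1, (u * v).1 x = v.1 (u.1 x)) :=
  stmt14_general n
end

section
/- For a normal cone γ in the power set category P_o(X_n) with vertex A, the map α : X_n → X_n defined by α(x) = γ({x})(x) is an order-preserving transformation with image A. -/
/-!
A cone is determined by its values on singletons: by compatibility, `γ B` sends `x ∈ B` to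
`γ {x} x`. Hence `α` agrees with every component of the cone. Monotonicity of `α` on `x ≤ y`
is monotonicity of the component at the pair `{x, y}`, a proper subset because `n ≥ 3`, and
the image of `α` contains the image of the bijective component, which is all of `A`.
-/

open Set

theorem Set.pair_ne_univ_of_three_le_card {α : Type*} [Finite α] (h : 3 ≤ Nat.card α)
    (x y : α) : ({x, y} : Set α) ≠ univ := by
  intro hxy
  have hcard : ({x, y} : Set α).ncard ≤ 2 := (ncard_insert_le x {y}).trans (by simp)
  rw [hxy, ncard_univ] at hcard
  omega

section Cone

variable {ι : Type*} {A : Set ι}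

def ConeCompatible (γ : ∀ B : Set ι, B.Nonempty ∧ B ≠ univ → (B → A)) : Prop :=
  ∀ (B B' : Set ι) (hB : B.Nonempty ∧ B ≠ univ) (hB' : B'.Nonempty ∧ B' ≠ univ) (h : B ⊆ B'),
    ∀ x : B, γ B' hB' (inclusion h x) = γ B hB x

variable {γ : ∀ B : Set ι, B.Nonempty ∧ B ≠ univ → (B → A)}

theorem ConeCompatible.apply_eq_singleton (hcompat : ConeCompatible γ) {B : Set ι}
    (hB : B.Nonempty ∧ B ≠ univ) {x : ι} (hx : x ∈ B)
    (hsx : ({x} : Set ι).Nonempty ∧ ({x} : Set ι) ≠ univ) :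
    γ B hB ⟨x, hx⟩ = γ {x} hsx ⟨x, rfl⟩ :=
  hcompat {x} B hsx hB (singleton_subset_iff.2 hx) ⟨x, rfl⟩

theorem ConeCompatible.singleton_le_singleton [Preorder ι] (hcompat : ConeCompatible γ)
    (hmono : ∀ B hB, Monotone (γ B hB)) {x y : ι} (hxy : x ≤ y)
    (hpair : ({x, y} : Set ι).Nonempty ∧ ({x, y} : Set ι) ≠ univ)
    (hx : ({x} : Set ι).Nonempty ∧ ({x} : Set ι) ≠ univ)
    (hy : ({y} : Set ι).Nonempty ∧ ({y} : Set ι) ≠ univ) :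
    γ {x} hx ⟨x, rfl⟩ ≤ γ {y} hy ⟨y, rfl⟩ := by
  rw [← hcompat.apply_eq_singleton hpair (mem_insert x {y}),
    ← hcompat.apply_eq_singleton hpair (mem_insert_of_mem x rfl)]
  exact hmono _ hpair hxy

theorem ConeCompatible.exists_singleton_eq (hcompat : ConeCompatible γ)
    {C : Set ι} {hC : C.Nonempty ∧ C ≠ univ} (hsurj : Function.Surjective (γ C hC))
    (hsing : ∀ x : ι, ({x} : Set ι).Nonempty ∧ ({x} : Set ι) ≠ univ) (a : A) :
    ∃ x, γ {x} (hsing x) ⟨x, rfl⟩ = a := by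
  obtain ⟨⟨x, hx⟩, rfl⟩ := hsurj a
  exact ⟨x, (hcompat.apply_eq_singleton hC hx (hsing x)).symm⟩

end Cone

theorem stmt15_general (n : ℕ) (hn : 3 ≤ n) (A : Set (Fin n))
    (γ : ∀ B : Set (Fin n), B.Nonempty ∧ B ≠ Set.univ → (B → A))
    (hmono : ∀ B hB, Monotone (γ B hB))
    (hcompat : ∀ (B B' : Set (Fin n)) (hB : B.Nonempty ∧ B ≠ Set.univ) (hB' : B'.Nonempty ∧ B' ≠ Set.univ) (h : B ⊆ B'), ∀ x : B, γ B' hB' (Set.inclusion h x) = γ B hB x)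
    (hnormal : ∃ C hC, Function.Bijective (γ C hC))
    (α : Fin n → Fin n)
    (hα : ∀ (x : Fin n) (hx : ({x} : Set (Fin n)).Nonempty ∧ ({x} : Set (Fin n)) ≠ Set.univ),
      α x = ((γ {x} hx ⟨x, rfl⟩ : A) : Fin n)) :
    Monotone α ∧ Set.range α = A := by
  have hcone : ConeCompatible γ := hcompat
  have hn' : 3 ≤ Nat.card (Fin n) := by simpa using hn
  have hpair (x y : Fin n) : ({x, y} : Set (Fin n)).Nonempty ∧ ({x, y} : Set (Fin n)) ≠ univ :=
    ⟨insert_nonempty x {y}, pair_ne_univ_of_three_le_card hn' x y⟩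
  have hsing (x : Fin n) : ({x} : Set (Fin n)).Nonempty ∧ ({x} : Set (Fin n)) ≠ univ := by
    simpa using hpair x x
  refine ⟨fun x y hxy => ?_, Subset.antisymm ?_ fun a ha => ?_⟩
  · rw [hα x (hsing x), hα y (hsing y)]
    exact hcone.singleton_le_singleton hmono hxy (hpair x y) (hsing x) (hsing y)
  · rintro _ ⟨x, rfl⟩
    rw [hα x (hsing x)]
    exact Subtype.prop _
  · obtain ⟨C, hC, hbij⟩ := hnormal
    obtain ⟨x, hx⟩ := hcone.exists_singleton_eq hbij.surjective hsing ⟨a, ha⟩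
    exact ⟨x, by rw [hα x (hsing x), hx]⟩

/-- For a normal cone `γ` with vertex `A` in the power set category `P_o(X_n)`,
the map `α : x ↦ γ({x})(x)` is an order-preserving transformation of `Fin n`
with image exactly `A`. -/
theorem stmt15 (n : ℕ) (hn : 3 ≤ n) (A : Set (Fin n))
    (hA : A.Nonempty) (hA2 : A ≠ Set.univ)
    (γ : ∀ B : Set (Fin n), B.Nonempty ∧ B ≠ Set.univ → (B → A))
    (hmono : ∀ B hB, Monotone (γ B hB))
    (hcompat : ∀ (B B' : Set (Fin n)) (hB : B.Nonempty ∧ B ≠ Set.univ) (hB' : B'.Nonempty ∧ B' ≠ Set.univ) (h : B ⊆ B'), ∀ x : B, γ B' hB' (Set.inclusion h x) = γ B hB x)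
    (hnormal : ∃ C hC, Function.Bijective (γ C hC))
    (α : Fin n → Fin n)
    (hα : ∀ (x : Fin n) (hx : ({x} : Set (Fin n)).Nonempty ∧ ({x} : Set (Fin n)) ≠ Set.univ),
      α x = ((γ {x} hx ⟨x, rfl⟩ : A) : Fin n)) :
    Monotone α ∧ Set.range α = A :=
  stmt15_general n hn A γ hmono hcompat hnormal α hα
end

section
/- The map φ : OX_n → T R(OX_n), α ↦ λ^α (the principal cone in the right ideal category), is injective: if α ≠ β in OX_n with ker α = ker β, then there exists an idempotent e ∈ OX_n such that α·e ≠ β·e, where e is constructed as follows: writing the common kernel partition as intervals A_1 < ... < A_k with α(A_i) = x_i, β(A_i) = y_i, take the least i with x_i ≠ y_i (say x_i < y_i) and define e(x) = x_i for x ≤ x_i and e(x) = x_k for x ≥ x_i + 1 (where x_k is the largest element of Im α); then e is an idempotent order-preserving transformation with α e ≠ β e. -/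
/-!
Pick `x` with `α x ≠ β x`, say `a = α x < b = β x`. The map sending every point `≤ a` to `a` and
every other point to `b` is order-preserving, idempotent and two-valued, hence not surjective on a
chain with at least three elements, and it fixes both `a` and `b`, so it separates `α` from `β`
at `x`.
-/

section StepRetraction

variable {X : Type*} [LinearOrder X]

def stepRetraction (a b : X) (y : X) : X :=
  if y ≤ a then a else b

variable {a b : X}

lemma stepRetraction_monotone (hab : a ≤ b) : Monotone (stepRetraction a b) := by
  intro x y hxy
  unfold stepRetraction
  split_ifs with hx hy hy
  exacts [le_rfl, hab, absurd (hxy.trans hy) hx, le_rfl]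

lemma stepRetraction_left (a b : X) : stepRetraction a b a = a :=
  if_pos le_rfl

lemma stepRetraction_right (hab : a < b) : stepRetraction a b b = b :=
  if_neg hab.not_ge

lemma stepRetraction_eq_or_eq (a b y : X) :
    stepRetraction a b y = a ∨ stepRetraction a b y = b := by
  unfold stepRetraction
  split_ifs <;> simp

lemma stepRetraction_comp_self (hab : a < b) :
    stepRetraction a b ∘ stepRetraction a b = stepRetraction a b := by
  funext y
  rcases stepRetraction_eq_or_eq a b y with h | h <;>
    simp only [Function.comp_apply, h, stepRetraction_left, stepRetraction_right hab]

lemma stepRetraction_not_surjective [Finite X] (hX : 2 < Nat.card X) (a b : X) :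
    ¬ Function.Surjective (stepRetraction a b) := by
  intro hs
  have hcond : Function.Surjective (fun t : Bool => cond t a b) := by
    intro z
    obtain ⟨y, rfl⟩ := hs z
    rcases stepRetraction_eq_or_eq a b y with h | h
    exacts [⟨true, h.symm⟩, ⟨false, h.symm⟩]
  have := Nat.card_le_card_of_surjective _ hcond
  simp only [Nat.card_eq_fintype_card, Fintype.card_bool] at this
  omega

end StepRetraction

lemma exists_stepRetraction_separating {X : Type*} [LinearOrder X] [Finite X]
    (hX : 2 < Nat.card X) {a b : X} (hab : a ≠ b) :
    ∃ e : X → X, Monotone e ∧ e ∘ e = e ∧ ¬ Function.Surjective e ∧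
      (∃ c d : X, ∀ x, e x = c ∨ e x = d) ∧ e a ≠ e b := by
  wlog hlt : a < b generalizing a b
  · obtain ⟨e, he⟩ := this hab.symm (hab.lt_or_gt.resolve_left hlt)
    exact ⟨e, he.1, he.2.1, he.2.2.1, he.2.2.2.1, he.2.2.2.2.symm⟩
  refine ⟨stepRetraction a b, stepRetraction_monotone hlt.le, stepRetraction_comp_self hlt,
    stepRetraction_not_surjective hX a b, ⟨a, b, stepRetraction_eq_or_eq a b⟩, ?_⟩
  rwa [stepRetraction_left, stepRetraction_right hlt]

theorem stmt19_general (n : ℕ) (hn : 3 ≤ n) (α β : Fin n → Fin n)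
    (hne : α ≠ β) :
    ∃ e : Fin n → Fin n, Monotone e ∧ e ∘ e = e ∧ ¬ Function.Surjective e ∧
      (∃ c d : Fin n, ∀ x, e x = c ∨ e x = d) ∧
      (fun x => e (α x)) ≠ (fun x => e (β x)) := by
  obtain ⟨x, hx⟩ := Function.ne_iff.mp hne
  obtain ⟨e, hmono, hidem, hnsurj, htwo, hsep⟩ :=
    exists_stepRetraction_separating (by rwa [Nat.card_fin]) hx
  exact ⟨e, hmono, hidem, hnsurj, htwo, fun h => hsep (congrFun h x)⟩

/-- Injectivity of `α ↦ λ^α`: for order-preserving non-invertible `α ≠ β` on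
`Fin n` with equal kernels there is an idempotent order-preserving
(non-invertible, two-valued) transformation `e` with `α · e ≠ β · e`
(composition left to right, so `α · e = fun x => e (α x)`). -/
theorem stmt19 (n : ℕ) (hn : 3 ≤ n) (α β : Fin n → Fin n)
    (hα : Monotone α) (hα' : ¬ Function.Surjective α)
    (hβ : Monotone β) (hβ' : ¬ Function.Surjective β)
    (hker : ∀ x y, α x = α y ↔ β x = β y) (hne : α ≠ β) :
    ∃ e : Fin n → Fin n, Monotone e ∧ e ∘ e = e ∧ ¬ Function.Surjective e ∧
      (∃ c d : Fin n, ∀ x, e x = c ∨ e x = d) ∧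
      (fun x => e (α x)) ≠ (fun x => e (β x)) :=
  stmt19_general n hn α β hne
end
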